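/- Let u = ξ + U be a C² T-periodic solution of u'' + c·u' + a(u⁻⁴ − u⁻³) = μ + e(t), with c ≠ 0, ∫₀ᵀ U dt = 0, and ∫₀ᵀ e dt = 0. Then ‖U'‖_{L²(0,T)} ≤ ‖e‖_{L²(0,T)} / |c|, and consequently ‖U‖_{L^∞(ℝ)} ≤ (√T / (2√3|c|)) · ‖e‖_{L²(0,T)}. -/

import Mathlib

/-!
Multiplying the equation by `U'` and integrating over a period, the terms `U'' U'`, `g(u) U'`
and `μ U'` are derivatives of periodic functions, so only `c ∫ U'² = ∫ e U'` survives, and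
Cauchy–Schwarz gives `‖U'‖₂ ≤ ‖e‖₂ / |c|`. Integrating `(s - t - T/2) U'(s)` by parts over
`[t, t + T]` and using that `U` has mean zero gives `T U(t) = ∫ (s - t - T/2) U'(s) ds`, so
Cauchy–Schwarz with `∫ (s - t - T/2)² ds = T³/12` yields `|U(t)| ≤ √(T/12) ‖U'‖₂`.
-/

open MeasureTheory intervalIntegral Real Function Set

theorem sq_intervalIntegral_mul_le {a b : ℝ} (hab : a ≤ b) {f g : ℝ → ℝ}
    (hf : Continuous f) (hg : Continuous g) :
    (∫ x in a..b, f x * g x) ^ 2 ≤ (∫ x in a..b, f x ^ 2) * ∫ x in a..b, g x ^ 2 := by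
  have hquad : ∀ s : ℝ, 0 ≤ (∫ x in a..b, f x ^ 2) * (s * s) +
      2 * (∫ x in a..b, f x * g x) * s + ∫ x in a..b, g x ^ 2 := fun s => by
    have hexpand : ∫ x in a..b, (s * f x + g x) ^ 2 = (∫ x in a..b, f x ^ 2) * (s * s) +
        2 * (∫ x in a..b, f x * g x) * s + ∫ x in a..b, g x ^ 2 := by
      have hint : ∀ h : ℝ → ℝ, Continuous h → IntervalIntegrable h volume a b :=
        fun h hh => hh.intervalIntegrable a b
      have hpt : ∀ x, (s * f x + g x) ^ 2 = s * s * f x ^ 2 + 2 * s * (f x * g x) + g x ^ 2 :=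
        fun x => by ring
      simp_rw [hpt]
      rw [intervalIntegral.integral_add (hint _ (by fun_prop)) (hint _ (by fun_prop)),
        intervalIntegral.integral_add (hint _ (by fun_prop)) (hint _ (by fun_prop)),
        intervalIntegral.integral_const_mul, intervalIntegral.integral_const_mul]
      ring
    exact hexpand ▸ integral_nonneg hab fun x _ => sq_nonneg _
  have := discrim_le_zero hquad
  rw [discrim] at this
  linarith

theorem Function.Periodic.deriv {f : ℝ → ℝ} {T : ℝ} (hf : Periodic f T) :
    Periodic (deriv f) T := fun x => by
  rw [← deriv_comp_add_const, hf.funext]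

theorem integral_comp_mul_deriv_eq_zero_of_periodic {x g : ℝ → ℝ} {T : ℝ}
    (hx : ContDiff ℝ 1 x) (hper : Periodic x T) (hg : ContinuousOn g (range x)) :
    ∫ t in 0..T, g (x t) * deriv x t = 0 := by
  have hsubst := integral_comp_mul_deriv' (a := 0) (b := T) (f := x)
    (fun t _ => (hx.differentiable one_ne_zero t).hasDerivAt)
    (hx.continuous_deriv le_rfl).continuousOn (hg.mono (image_subset_range _ _))
  rwa [show x T = x 0 by simpa using hper 0, integral_same] at hsubst

theorem mul_integral_deriv_sq_eq_of_periodic_ode {x g f : ℝ → ℝ} {T c : ℝ}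
    (hx : ContDiff ℝ 2 x) (hper : Periodic x T) (hg : ContinuousOn g (range x))
    (hode : ∀ t, iteratedDeriv 2 x t + c * deriv x t + g (x t) = f t) :
    c * ∫ t in 0..T, deriv x t ^ 2 = ∫ t in 0..T, f t * deriv x t := by
  have hx' : ContDiff ℝ 1 (deriv x) := (contDiff_succ_iff_deriv.mp hx).2.2
  have hx'' : iteratedDeriv 2 x = deriv (deriv x) := by
    rw [iteratedDeriv_succ, iteratedDeriv_one]
  have hkinetic : ∫ t in 0..T, deriv x t * deriv (deriv x) t = 0 :=
    integral_comp_mul_deriv_eq_zero_of_periodic (g := id) hx' hper.deriv continuousOn_id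
  have hpotential : ∫ t in 0..T, g (x t) * deriv x t = 0 :=
    integral_comp_mul_deriv_eq_zero_of_periodic (hx.of_le one_le_two) hper hg
  have hint : ∀ h : ℝ → ℝ, Continuous h → IntervalIntegrable h volume 0 T :=
    fun h hh => hh.intervalIntegrable 0 T
  have hcont'' : Continuous (deriv (deriv x)) := hx'.continuous_deriv le_rfl
  have hcont' : Continuous (deriv x) := hx'.continuous
  have hpot_cont : Continuous fun t => g (x t) * deriv x t :=
    (hg.comp_continuous hx.continuous mem_range_self).mul hcont'
  calc c * ∫ t in 0..T, deriv x t ^ 2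
      = ∫ t in 0..T, (deriv x t * deriv (deriv x) t + c * deriv x t ^ 2 +
          g (x t) * deriv x t) := by
        rw [intervalIntegral.integral_add (hint _ (by fun_prop)) (hint _ hpot_cont),
          intervalIntegral.integral_add (hint _ (by fun_prop)) (hint _ (by fun_prop)),
          intervalIntegral.integral_const_mul, hkinetic, hpotential, zero_add, add_zero]
    _ = ∫ t in 0..T, f t * deriv x t := by
        refine integral_congr fun t _ => ?_
        rw [← hode t, hx'']
        ring

theorem sq_mul_integral_deriv_sq_le_of_periodic_ode {x g f : ℝ → ℝ} {T c : ℝ} (hT : 0 ≤ T)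
    (hx : ContDiff ℝ 2 x) (hper : Periodic x T) (hg : ContinuousOn g (range x))
    (hf : Continuous f) (hode : ∀ t, iteratedDeriv 2 x t + c * deriv x t + g (x t) = f t) :
    c ^ 2 * ∫ t in 0..T, deriv x t ^ 2 ≤ ∫ t in 0..T, f t ^ 2 := by
  have hcs := sq_intervalIntegral_mul_le hT hf (hx.continuous_deriv one_le_two)
  rw [← mul_integral_deriv_sq_eq_of_periodic_ode hx hper hg hode] at hcs
  have hI : 0 ≤ ∫ t in 0..T, deriv x t ^ 2 := integral_nonneg hT fun t _ => sq_nonneg _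
  rcases hI.eq_or_lt with hI0 | hIpos
  · rw [← hI0, mul_zero]
    exact integral_nonneg hT fun t _ => sq_nonneg _
  · exact le_of_mul_le_mul_right (by linarith) hIpos

theorem mul_eq_integral_sub_mul_deriv_of_periodic {U : ℝ → ℝ} {T : ℝ} (hU : ContDiff ℝ 1 U)
    (hper : Periodic U T) (havg : ∫ s in 0..T, U s = 0) (t : ℝ) :
    T * U t = ∫ s in t..t + T, (s - (t + T / 2)) * deriv U s := by
  have hshift : ∫ s in t..t + T, U s = 0 := by
    rw [hper.intervalIntegral_add_eq t 0, zero_add, havg]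
  rw [integral_mul_deriv_eq_deriv_mul (u := fun s => s - (t + T / 2))
    (u' := fun _ => 1) (fun s _ => (hasDerivAt_id' s).sub_const _)
    (fun s _ => (hU.differentiable one_ne_zero s).hasDerivAt)
    intervalIntegrable_const ((hU.continuous_deriv le_rfl).intervalIntegrable _ _)]
  simp only [one_mul, hshift, hper t]
  ring

theorem integral_sub_midpoint_sq (t T : ℝ) :
    ∫ s in t..t + T, (s - (t + T / 2)) ^ 2 = T ^ 3 / 12 := by
  simp [integral_comp_sub_right (fun s => s ^ 2), integral_pow]
  ring

theorem abs_le_of_periodic_of_integral_eq_zero {U : ℝ → ℝ} {T : ℝ} (hT : 0 < T)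
    (hU : ContDiff ℝ 1 U) (hper : Periodic U T) (havg : ∫ s in 0..T, U s = 0) (t : ℝ) :
    |U t| ≤ √T / (2 * √3) * √(∫ s in 0..T, deriv U s ^ 2) := by
  have hper_sq : Periodic (fun s => deriv U s ^ 2) T := fun s => by simp only [hper.deriv s]
  have hcs := sq_intervalIntegral_mul_le (a := t) (le_add_of_nonneg_right hT.le)
    (f := fun s => s - (t + T / 2)) (by fun_prop) (hU.continuous_deriv le_rfl)
  rw [← mul_eq_integral_sub_mul_deriv_of_periodic hU hper havg t, integral_sub_midpoint_sq,
    hper_sq.intervalIntegral_add_eq t 0, zero_add] at hcs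
  have hsq : U t ^ 2 ≤ T / 12 * ∫ s in 0..T, deriv U s ^ 2 := by
    refine le_of_mul_le_mul_left ?_ (pow_pos hT 2)
    calc T ^ 2 * U t ^ 2 = (T * U t) ^ 2 := by ring
      _ ≤ T ^ 3 / 12 * ∫ s in 0..T, deriv U s ^ 2 := hcs
      _ = T ^ 2 * (T / 12 * ∫ s in 0..T, deriv U s ^ 2) := by ring
  have hconst : √(T / 12) = √T / (2 * √3) := by
    rw [Real.sqrt_div' _ (by norm_num), show (12 : ℝ) = 2 ^ 2 * 3 by norm_num,
      Real.sqrt_mul (by norm_num), Real.sqrt_sq (by norm_num)]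
  calc |U t| = √(U t ^ 2) := (Real.sqrt_sq_eq_abs _).symm
    _ ≤ √(T / 12 * ∫ s in 0..T, deriv U s ^ 2) := Real.sqrt_le_sqrt hsq
    _ = √T / (2 * √3) * √(∫ s in 0..T, deriv U s ^ 2) := by
      rw [Real.sqrt_mul (by positivity), hconst]

theorem oscillation_estimate_general (T a c μ ξ : ℝ) (hT : 0 < T) (hc : c ≠ 0)
    (e U : ℝ → ℝ) (he : Continuous e)
    (hU : ContDiff ℝ 2 U) (hUper : Function.Periodic U T)
    (hUavg : ∫ t in (0:ℝ)..T, U t = 0)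
    (hupos : ∀ t, 0 < ξ + U t)
    (heq : ∀ t, iteratedDeriv 2 U t + c * deriv U t +
      a * (1 / (ξ + U t) ^ 4 - 1 / (ξ + U t) ^ 3) = μ + e t) :
    (∫ s in (0:ℝ)..T, (deriv U s) ^ 2) ^ ((1:ℝ)/2) ≤
        (∫ s in (0:ℝ)..T, (e s) ^ 2) ^ ((1:ℝ)/2) / |c| ∧
      ∀ t, |U t| ≤ (Real.sqrt T / (2 * Real.sqrt 3 * |c|)) *
        (∫ s in (0:ℝ)..T, (e s) ^ 2) ^ ((1:ℝ)/2) := by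
  set g : ℝ → ℝ := fun y => a * (1 / (ξ + y) ^ 4 - 1 / (ξ + y) ^ 3) - μ
  have hg : ContinuousOn g (range U) := by
    rintro _ ⟨t, rfl⟩
    have hne : ξ + U t ≠ 0 := (hupos t).ne'
    exact ContinuousAt.continuousWithinAt (by fun_prop (disch := simp_all))
  have hode : ∀ t, iteratedDeriv 2 U t + c * deriv U t + g (U t) = e t := fun t => by
    simp only [g]
    linarith [heq t]
  have henergy := sq_mul_integral_deriv_sq_le_of_periodic_ode hT.le hU hUper hg he hode
  have hderiv : √(∫ s in 0..T, deriv U s ^ 2) ≤ √(∫ s in 0..T, e s ^ 2) / |c| := by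
    rw [le_div_iff₀ (abs_pos.mpr hc), ← Real.sqrt_sq_eq_abs,
      ← Real.sqrt_mul (integral_nonneg hT.le fun s _ => sq_nonneg _)]
    exact Real.sqrt_le_sqrt (by linarith)
  simp only [← Real.sqrt_eq_rpow]
  refine ⟨hderiv, fun t => ?_⟩
  calc |U t| ≤ √T / (2 * √3) * √(∫ s in 0..T, deriv U s ^ 2) :=
        abs_le_of_periodic_of_integral_eq_zero hT (hU.of_le one_le_two) hUper hUavg t
    _ ≤ √T / (2 * √3) * (√(∫ s in 0..T, e s ^ 2) / |c|) := by gcongr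
    _ = √T / (2 * √3 * |c|) * √(∫ s in 0..T, e s ^ 2) := by ring

/-- Oscillation estimate for the condensed-matter equation
`u'' + c u' + a(u⁻⁴ − u⁻³) = μ + e(t)`, `c ≠ 0`:
`‖U'‖_{L²} ≤ ‖e‖_{L²}/|c|` and `‖U‖_∞ ≤ (√T/(2√3|c|)) ‖e‖_{L²}`. -/
theorem oscillation_estimate (T a c μ ξ : ℝ) (hT : 0 < T) (hc : c ≠ 0)
    (e U : ℝ → ℝ) (he : Continuous e) (heper : Function.Periodic e T)
    (heavg : ∫ t in (0:ℝ)..T, e t = 0)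
    (hU : ContDiff ℝ 2 U) (hUper : Function.Periodic U T)
    (hUavg : ∫ t in (0:ℝ)..T, U t = 0)
    (hupos : ∀ t, 0 < ξ + U t)
    (heq : ∀ t, iteratedDeriv 2 U t + c * deriv U t +
      a * (1 / (ξ + U t) ^ 4 - 1 / (ξ + U t) ^ 3) = μ + e t) :
    (∫ s in (0:ℝ)..T, (deriv U s) ^ 2) ^ ((1:ℝ)/2) ≤
        (∫ s in (0:ℝ)..T, (e s) ^ 2) ^ ((1:ℝ)/2) / |c| ∧
      ∀ t, |U t| ≤ (Real.sqrt T / (2 * Real.sqrt 3 * |c|)) *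
        (∫ s in (0:ℝ)..T, (e s) ^ 2) ^ ((1:ℝ)/2) :=
  oscillation_estimate_general T a c μ ξ hT hc e U he hU hUper hUavg hupos heq
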